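/- A pair (R, y) ∈ ℝ^{3×3} × ℝ satisfies the homogenized constraints RᵀR = y²I₃, RRᵀ = y²I₃, R⁽¹⁾ × R⁽²⁾ = yR⁽³⁾, R⁽²⁾ × R⁽³⁾ = yR⁽¹⁾, R⁽³⁾ × R⁽¹⁾ = yR⁽²⁾, and y² = 1 if and only if y = 1 or y = −1 and the matrix y·R belongs to SO(3). In particular, for any solution, R/y ∈ SO(3). -/

import Mathlib

open Matrix

/-- The `j`-th column of a real 3×3 matrix, as a vector in `ℝ³`. -/
def col3 (R : Matrix (Fin 3) (Fin 3) ℝ) (j : Fin 3) : Fin 3 → ℝ := fun i => R i j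

/-- `SO(3)`: real 3×3 matrices with `RᵀR = I` and `det R = 1`. -/
def SO3 : Set (Matrix (Fin 3) (Fin 3) ℝ) := {R | Rᵀ * R = 1 ∧ R.det = 1}

/-- The homogenized `SO(3)` constraints on a pair `(R, y)`. -/
def HomogenizedConstraints (R : Matrix (Fin 3) (Fin 3) ℝ) (y : ℝ) : Prop :=
  Rᵀ * R = y ^ 2 • (1 : Matrix (Fin 3) (Fin 3) ℝ) ∧
  R * Rᵀ = y ^ 2 • (1 : Matrix (Fin 3) (Fin 3) ℝ) ∧
  col3 R 0 ⨯₃ col3 R 1 = y • col3 R 2 ∧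
  col3 R 1 ⨯₃ col3 R 2 = y • col3 R 0 ∧
  col3 R 2 ⨯₃ col3 R 0 = y • col3 R 1 ∧
  y ^ 2 = 1

/-! The cross product of two columns of `R` is a row of its adjugate, and for an
orthogonal matrix `adj R = det R • Rᵀ`. Hence, once `y² = 1` and `RᵀR = I`, the three cross-product
constraints say exactly `det R = y`, which is `det (y • R) = y⁴ = 1`. -/

theorem Matrix.adjugate_eq_det_smul_transpose {n α : Type*} [Fintype n] [DecidableEq n]
    [CommRing α] {A : Matrix n n α} (hA : Aᵀ * A = 1) : adjugate A = A.det • Aᵀ := by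
  calc adjugate A = Aᵀ * (A * adjugate A) := by rw [← Matrix.mul_assoc, hA, Matrix.one_mul]
    _ = A.det • Aᵀ := by rw [mul_adjugate, Matrix.mul_smul, Matrix.mul_one]

lemma col3_cross_col3_zero_one (S : Matrix (Fin 3) (Fin 3) ℝ) :
    col3 S 0 ⨯₃ col3 S 1 = adjugate S 2 := by
  funext i; fin_cases i <;> simp [col3, cross_apply, adjugate_fin_three] <;> ring

lemma col3_cross_col3_one_two (S : Matrix (Fin 3) (Fin 3) ℝ) :
    col3 S 1 ⨯₃ col3 S 2 = adjugate S 0 := by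
  funext i; fin_cases i <;> simp [col3, cross_apply, adjugate_fin_three] <;> ring

lemma col3_cross_col3_two_zero (S : Matrix (Fin 3) (Fin 3) ℝ) :
    col3 S 2 ⨯₃ col3 S 0 = adjugate S 1 := by
  funext i; fin_cases i <;> simp [col3, cross_apply, adjugate_fin_three] <;> ring

lemma det_eq_col3_dotProduct_cross (S : Matrix (Fin 3) (Fin 3) ℝ) :
    S.det = col3 S 0 ⬝ᵥ col3 S 1 ⨯₃ col3 S 2 := by
  rw [triple_product_eq_det, ← det_transpose]
  congr 1
  ext i j
  fin_cases i <;> rfl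

lemma col3_dotProduct_col3 (S : Matrix (Fin 3) (Fin 3) ℝ) (j : Fin 3) :
    col3 S j ⬝ᵥ col3 S j = (Sᵀ * S) j j :=
  rfl

lemma smul_mem_SO3_iff {R : Matrix (Fin 3) (Fin 3) ℝ} {y : ℝ} (hy : y ^ 2 = 1) :
    y • R ∈ SO3 ↔ Rᵀ * R = 1 ∧ R.det = y := by
  have hgram : (y • R)ᵀ * (y • R) = Rᵀ * R := by
    rw [transpose_smul, Matrix.smul_mul, Matrix.mul_smul, smul_smul, ← sq, hy, one_smul]
  have hdet : (y • R).det = y * R.det := by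
    rw [det_smul, Fintype.card_fin, pow_succ, hy, one_mul]
  have hdet_iff : y * R.det = 1 ↔ R.det = y :=
    ⟨fun h => by linear_combination y * h - R.det * hy, fun h => by linear_combination y * h + hy⟩
  simp only [SO3, Set.mem_ofPred_eq, hgram, hdet, hdet_iff]

lemma homogenizedConstraints_iff {R : Matrix (Fin 3) (Fin 3) ℝ} {y : ℝ} :
    HomogenizedConstraints R y ↔ y ^ 2 = 1 ∧ Rᵀ * R = 1 ∧ R.det = y := by
  constructor
  · rintro ⟨hgram, -, -, hcross₁₂, -, hy⟩
    have hgram' : Rᵀ * R = 1 := by rw [hgram, hy, one_smul]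
    refine ⟨hy, hgram', ?_⟩
    calc R.det = y * (col3 R 0 ⬝ᵥ col3 R 0) := by
          rw [det_eq_col3_dotProduct_cross, hcross₁₂, dotProduct_smul, smul_eq_mul]
      _ = y := by rw [col3_dotProduct_col3, hgram', one_apply_eq, mul_one]
  · rintro ⟨hy, hgram, hdet⟩
    have hadj : ∀ k, adjugate R k = y • col3 R k := fun k => by
      rw [adjugate_eq_det_smul_transpose hgram, hdet]
      rfl
    refine ⟨?_, ?_, ?_, ?_, ?_, hy⟩
    · rw [hgram, hy, one_smul]
    · rw [mul_eq_one_comm.mp hgram, hy, one_smul]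
    · rw [col3_cross_col3_zero_one, hadj]
    · rw [col3_cross_col3_one_two, hadj]
    · rw [col3_cross_col3_two_zero, hadj]

theorem homogenized_so3_characterization (R : Matrix (Fin 3) (Fin 3) ℝ) (y : ℝ) :
    (HomogenizedConstraints R y ↔ (y = 1 ∨ y = -1) ∧ y • R ∈ SO3) ∧
    (HomogenizedConstraints R y → y⁻¹ • R ∈ SO3) := by
  have hchar : HomogenizedConstraints R y ↔ (y = 1 ∨ y = -1) ∧ y • R ∈ SO3 := by
    rw [homogenizedConstraints_iff, ← sq_eq_one_iff]
    exact and_congr_right fun hy => (smul_mem_SO3_iff hy).symm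
  refine ⟨hchar, fun h => ?_⟩
  obtain ⟨hy, hR⟩ := hchar.mp h
  have hinv : y⁻¹ = y := (eq_inv_of_mul_eq_one_left (by rw [← sq, sq_eq_one_iff]; exact hy)).symm
  rwa [hinv]
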